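/- Let (L, ∘_λ, [·_λ ·]) be a transposed Poisson conformal superalgebra. Then for all homogeneous x, y, z ∈ L the following identity holds: (−1)^{|x||z|} [x_λ y] ∘_μ z + (−1)^{|x||y|} [y_{μ−λ} z] ∘_{−∂−λ} x + (−1)^{|y||z|} [z_{−∂−λ} x] ∘_{−∂−μ+λ} y = 0. -/

import Mathlib

open Polynomial
open scoped TensorProduct

noncomputable section

namespace TPCSAFormal

/-- The super-sign `(-1)^{i·j}` for parities `i, j ∈ ℤ/2ℤ`. -/
def sgn (i j : ZMod 2) : ℂ := (-1 : ℂ) ^ (i.val * j.val)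

variable (L : Type*) [AddCommGroup L] [Module ℂ L]
  [Module (Polynomial ℂ) L] [IsScalarTower ℂ (Polynomial ℂ) L]

/-- A conformal `λ`-product on the `ℂ[∂]`-module `L`, recorded by its family of `n`-th
product coefficients: `a ∘_λ b = ∑_n λ^n • coeff n a b`, with finitely many nonzero terms.
This is exactly the data of a `ℂ`-bilinear map `L ⊗ L → ℂ[λ] ⊗ L`. -/
structure ConformalProduct where
  coeff : ℕ → L →ₗ[ℂ] L →ₗ[ℂ] L
  coeff_finite : ∀ a b : L, ∃ N : ℕ, ∀ n : ℕ, N ≤ n → coeff n a b = 0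

variable {L}

/-- The value `a ∘_λ b` of the `λ`-product at `λ ∈ ℂ`.  Since `ℂ` is infinite, identities
between such values for all `λ` are equivalent to the corresponding polynomial identities. -/
def ConformalProduct.mul (m : ConformalProduct L) (lam : ℂ) (a b : L) : L :=
  ∑ᶠ n : ℕ, lam ^ n • m.coeff n a b

/-- The value `a ∘_{-∂-λ} b`, where `∂` acts on `L` as scalar multiplication by
`X ∈ ℂ[∂]` (the variable `λ` being replaced by the operator `-∂-λ`). -/
def ConformalProduct.cmul (m : ConformalProduct L) (lam : ℂ) (a b : L) : L :=
  ∑ᶠ n : ℕ, ((-((X : Polynomial ℂ) + C lam)) ^ n) • m.coeff n a b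

variable (L) in
/-- A `ℤ₂`-grading on `L` making it a `ℤ₂`-graded `ℂ[∂]`-module: `L = L₀ ⊕ L₁` with
`∂ L_i ⊆ L_i`, where `∂` acts as multiplication by `X ∈ ℂ[∂]`. -/
structure SuperModule where
  grade : ZMod 2 → Submodule ℂ L
  isInternal : DirectSum.IsInternal grade
  X_smul_mem : ∀ (i : ZMod 2) (a : L), a ∈ grade i → (X : Polynomial ℂ) • a ∈ grade i

/-- `m` is an even `λ`-product on the `ℤ₂`-graded `ℂ[∂]`-module `(L, S)`:
it is even with respect to the grading and conformally sesquilinear. -/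
structure IsLambdaProduct (S : SuperModule L) (m : ConformalProduct L) : Prop where
  even : ∀ (i j : ZMod 2) (a b : L), a ∈ S.grade i → b ∈ S.grade j →
    ∀ n : ℕ, m.coeff n a b ∈ S.grade (i + j)
  sesq_left : ∀ (lam : ℂ) (a b : L),
    m.mul lam ((X : Polynomial ℂ) • a) b = (-lam) • m.mul lam a b
  sesq_right : ∀ (lam : ℂ) (a b : L),
    m.mul lam a ((X : Polynomial ℂ) • b) =
      (X : Polynomial ℂ) • m.mul lam a b + lam • m.mul lam a b

/-- `(L, S, m)` is a commutative associative conformal superalgebra. -/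
structure IsCommAssoc (S : SuperModule L) (m : ConformalProduct L)
    extends IsLambdaProduct S m : Prop where
  comm : ∀ (i j : ZMod 2) (a b : L), a ∈ S.grade i → b ∈ S.grade j →
    ∀ lam : ℂ, m.mul lam a b = sgn i j • m.cmul lam b a
  assoc : ∀ (lam mu : ℂ) (a b c : L),
    m.mul lam a (m.mul mu b c) = m.mul (lam + mu) (m.mul lam a b) c

/-- `(L, S, br)` is a Lie conformal superalgebra. -/
structure IsLie (S : SuperModule L) (br : ConformalProduct L)
    extends IsLambdaProduct S br : Prop where
  skew : ∀ (i j : ZMod 2) (a b : L), a ∈ S.grade i → b ∈ S.grade j →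
    ∀ lam : ℂ, br.mul lam a b = -(sgn i j • br.cmul lam b a)
  jacobi : ∀ (i j : ZMod 2) (a b : L), a ∈ S.grade i → b ∈ S.grade j →
    ∀ (c : L) (lam mu : ℂ),
      br.mul lam a (br.mul mu b c) =
        br.mul (lam + mu) (br.mul lam a b) c + sgn i j • br.mul mu b (br.mul lam a c)

/-- `(L, S, m, br)` is a transposed Poisson conformal superalgebra. -/
structure IsTPCSA (S : SuperModule L) (m br : ConformalProduct L) : Prop where
  commAssoc : IsCommAssoc S m
  lie : IsLie S br
  transposedLeibniz : ∀ (i j : ZMod 2) (a b : L), a ∈ S.grade i → b ∈ S.grade j →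
    ∀ (c : L) (lam mu : ℂ),
      (2 : ℂ) • m.mul lam a (br.mul mu b c) =
        br.mul (lam + mu) (m.mul lam a b) c + sgn i j • br.mul mu b (m.mul lam a c)

/-- `(L, S, m, br)` is a Poisson conformal superalgebra. -/
structure IsPCSA (S : SuperModule L) (m br : ConformalProduct L) : Prop where
  commAssoc : IsCommAssoc S m
  lie : IsLie S br
  leibniz : ∀ (i j : ZMod 2) (a b : L), a ∈ S.grade i → b ∈ S.grade j →
    ∀ (c : L) (lam mu : ℂ),
      br.mul lam a (m.mul mu b c) =
        m.mul (lam + mu) (br.mul lam a b) c + sgn i j • m.mul mu b (br.mul lam a c)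

/-- `(L, S, br, α)` is a Hom-Lie conformal superalgebra. -/
structure IsHomLie (S : SuperModule L) (br : ConformalProduct L) (α : L → L)
    extends IsLambdaProduct S br : Prop where
  map_smul_add : ∀ (c : ℂ) (a b : L), α (c • a + b) = c • α a + α b
  map_grade : ∀ (i : ZMod 2) (a : L), a ∈ S.grade i → α a ∈ S.grade i
  commute_partial : ∀ a : L, α ((X : Polynomial ℂ) • a) = (X : Polynomial ℂ) • α a
  skew : ∀ (i j : ZMod 2) (a b : L), a ∈ S.grade i → b ∈ S.grade j →
    ∀ lam : ℂ, br.mul lam a b = -(sgn i j • br.cmul lam b a)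
  homJacobi : ∀ (i j : ZMod 2) (a b : L), a ∈ S.grade i → b ∈ S.grade j →
    ∀ (c : L) (lam mu : ℂ),
      br.mul lam (α a) (br.mul mu b c) =
        br.mul (lam + mu) (br.mul lam a b) (α c) + sgn i j • br.mul mu (α b) (br.mul lam a c)

/-- `(L, S, p)` is a left-symmetric conformal superalgebra. -/
structure IsLeftSymmetric (S : SuperModule L) (p : ConformalProduct L)
    extends IsLambdaProduct S p : Prop where
  leftSym : ∀ (i j : ZMod 2) (a b : L), a ∈ S.grade i → b ∈ S.grade j →
    ∀ (c : L) (lam mu : ℂ),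
      p.mul (lam + mu) (p.mul lam a b) c - p.mul lam a (p.mul mu b c) =
        sgn i j • (p.mul (lam + mu) (p.mul mu b a) c - p.mul mu b (p.mul lam a c))

/-- `(L, S, p)` is a (left) Novikov conformal superalgebra. -/
structure IsNovikov (S : SuperModule L) (p : ConformalProduct L)
    extends IsLeftSymmetric S p : Prop where
  novikov : ∀ (j k : ZMod 2) (b c : L), b ∈ S.grade j → c ∈ S.grade k →
    ∀ (a : L) (lam mu : ℂ),
      p.mul (lam + mu) (p.mul lam a b) c = sgn j k • p.cmul mu (p.mul lam a c) b

/-- `(L, S, mc, p)` is a Novikov-Poisson conformal superalgebra. -/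
structure IsNovikovPoisson (S : SuperModule L) (mc p : ConformalProduct L) : Prop where
  commAssoc : IsCommAssoc S mc
  novikov : IsNovikov S p
  compat₁ : ∀ (lam mu : ℂ) (a b c : L),
    p.mul (lam + mu) (mc.mul lam a b) c = mc.mul lam a (p.mul mu b c)
  compat₂ : ∀ (i j : ZMod 2) (a b : L), a ∈ S.grade i → b ∈ S.grade j →
    ∀ (c : L) (lam mu : ℂ),
      mc.mul (lam + mu) (p.mul lam a b) c - p.mul lam a (mc.mul mu b c) =
        sgn i j • (mc.mul (lam + mu) (p.mul mu b a) c - p.mul mu b (mc.mul lam a c))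

/-- `(L, S, mc, p)` is a pre-Lie commutative conformal superalgebra. -/
structure IsPreLieComm (S : SuperModule L) (mc p : ConformalProduct L) : Prop where
  commAssoc : IsCommAssoc S mc
  leftSymmetric : IsLeftSymmetric S p
  compat : ∀ (i j : ZMod 2) (a b : L), a ∈ S.grade i → b ∈ S.grade j →
    ∀ (c : L) (lam mu : ℂ),
      p.mul lam a (mc.mul mu b c) =
        mc.mul (lam + mu) (p.mul lam a b) c + sgn i j • mc.mul mu b (p.mul lam a c)

/-- `(L, S, mc, p)` is a pre-Lie Poisson conformal superalgebra. -/
structure IsPreLiePoisson (S : SuperModule L) (mc p : ConformalProduct L) : Prop where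
  commAssoc : IsCommAssoc S mc
  leftSymmetric : IsLeftSymmetric S p
  compat₁ : ∀ (lam mu : ℂ) (a b c : L),
    p.mul (lam + mu) (mc.mul lam a b) c = mc.mul lam a (p.mul mu b c)
  compat₂ : ∀ (i j : ZMod 2) (a b : L), a ∈ S.grade i → b ∈ S.grade j →
    ∀ (c : L) (lam mu : ℂ),
      mc.mul (lam + mu) (p.mul lam a b) c - p.mul lam a (mc.mul mu b c) =
        sgn i j • (mc.mul (lam + mu) (p.mul mu b a) c - p.mul mu b (mc.mul lam a c))

set_option linter.unusedSectionVars false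

/-!
Commutativity and skew-symmetry turn the second and third terms into products at scalar
parameters, which the transposed Leibniz rule expresses through `[(x ∘_λ y)_μ z]`,
`[y_{μ-λ} (x ∘_λ z)]` and `[x_λ (y ∘_{μ-λ} z)]`. The first term is `z ∘_{-∂-μ} [x_λ y]`, a product at
the operator parameter `-∂-μ`: it is obtained by evaluating the transposed Leibniz rule for
`z ∘_ν [x_λ y]`, a polynomial identity in `ν`, at `ν = -∂-μ`. Sesquilinearity turns the `∂`
that this substitution puts inside the brackets back into scalars, and the three resulting
expressions cancel.
-/

lemma sgn_comm (i j : ZMod 2) : sgn i j = sgn j i := by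
  rw [sgn, sgn, Nat.mul_comm]

lemma sgn_mul_self (i j : ZMod 2) : sgn i j * sgn i j = 1 := by
  rw [sgn, ← pow_add, ← two_mul, pow_mul, neg_one_sq, one_pow]

lemma sgn_add_left (i j k : ZMod 2) : sgn (i + j) k = sgn i k * sgn j k := by
  rw [sgn, sgn, sgn, ZMod.val_add, pow_mul, ← neg_one_pow_eq_pow_mod_two, pow_add, mul_pow,
    ← pow_mul, ← pow_mul]

lemma sgn_add_right (i j k : ZMod 2) : sgn i (j + k) = sgn i j * sgn i k := by
  rw [sgn_comm, sgn_add_left, sgn_comm j, sgn_comm k]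

lemma sgn_eq_one_or_eq_neg_one (i j : ZMod 2) : sgn i j = 1 ∨ sgn i j = -1 :=
  neg_one_pow_eq_or ℂ _

section PolynomialExtension

variable {K M : Type*} [Field K] [AddCommGroup M] [Module K M]

lemma C_smul_eq_smul [Module K[X] M] [IsScalarTower K K[X] M] (c : K) (v : M) :
    (C c : K[X]) • v = c • v := by
  rw [← Polynomial.algebraMap_eq, algebraMap_smul]

lemma Finsupp.eq_zero_of_forall_sum_pow_smul_eq_zero [Infinite K] {f : ℕ →₀ M}
    (h : ∀ ν : K, (f.sum fun n v => ν ^ n • v) = 0) : f = 0 := by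
  ext n
  rw [Finsupp.coe_zero, Pi.zero_apply, ← Module.forall_dual_apply_eq_zero_iff K]
  intro φ
  let p : K[X] := f.sum fun n v => monomial n (φ v)
  have hp : p = 0 := Polynomial.funext fun ν => by
    simpa [p, Finsupp.sum, Polynomial.eval_finsetSum, mul_comm] using congrArg φ (h ν)
  have hcoeff := congrArg (coeff · n) hp
  by_cases hn : f n = 0
  · simp [hn]
  · simpa [p, Finsupp.sum, Polynomial.finsetSum_coeff, Polynomial.coeff_monomial, hn] using hcoeff

variable [Module K[X] M]

/-- `F : K → M` is a polynomial function `F ν = ∑ νⁿ • fₙ` and `a = ∑ qⁿ • fₙ` is its value at the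
operator `q ∈ K[X]`; over an infinite field `a` does not depend on the coefficients `fₙ`
(`HasEvalAt.unique`). This is how `λ ↦ -∂-λ` substitutions are made. -/
def HasEvalAt (F : K → M) (a : M) (q : K[X]) : Prop :=
  ∃ f : ℕ →₀ M, (∀ ν, F ν = f.sum fun n v => ν ^ n • v) ∧ a = f.sum fun n v => q ^ n • v

namespace HasEvalAt

variable {F G : K → M} {a b : M} {q : K[X]}

lemma unique [Infinite K] (ha : HasEvalAt F a q) (hb : HasEvalAt F b q) : a = b := by
  obtain ⟨f, hf, rfl⟩ := ha
  obtain ⟨g, hg, rfl⟩ := hb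
  suffices f - g = 0 by rw [sub_eq_zero.1 this]
  refine Finsupp.eq_zero_of_forall_sum_pow_smul_eq_zero (K := K) fun ν => ?_
  rw [Finsupp.sum_sub_index (fun _ _ _ => smul_sub _ _ _), ← hf, ← hg, sub_self]

lemma congr (h : HasEvalAt F a q) (hFG : ∀ ν, G ν = F ν) : HasEvalAt G a q := by
  obtain ⟨f, hf, ha⟩ := h
  exact ⟨f, fun ν => (hFG ν).trans (hf ν), ha⟩

lemma zero : HasEvalAt (fun _ => (0 : M)) 0 q := ⟨0, by simp, by simp⟩

lemma add (hF : HasEvalAt F a q) (hG : HasEvalAt G b q) :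
    HasEvalAt (fun ν => F ν + G ν) (a + b) q := by
  obtain ⟨f, hf, rfl⟩ := hF
  obtain ⟨g, hg, rfl⟩ := hG
  refine ⟨f + g, fun ν => ?_, ?_⟩ <;>
    simp only [Finsupp.sum_add_index' (fun _ => smul_zero _) (fun _ _ _ => smul_add _ _ _), hf, hg]

lemma smul [IsScalarTower K K[X] M] (c : K) (h : HasEvalAt F a q) :
    HasEvalAt (fun ν => c • F ν) (c • a) q := by
  obtain ⟨f, hf, rfl⟩ := h
  refine ⟨c • f, fun ν => ?_, ?_⟩ <;>
    simp only [Finsupp.sum_smul_index' (fun _ => smul_zero _), Finsupp.smul_sum, smul_comm c, hf]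

lemma sum {ι : Type*} (s : Finset ι) {F : ι → K → M} {a : ι → M}
    (h : ∀ i ∈ s, HasEvalAt (F i) (a i) q) :
    HasEvalAt (fun ν => ∑ i ∈ s, F i ν) (∑ i ∈ s, a i) q := by
  classical
  induction s using Finset.induction_on with
  | empty => simpa using zero
  | insert i s hi ih =>
    simp only [Finset.sum_insert hi]
    exact (h i (s.mem_insert_self i)).add (ih fun j hj => h j (Finset.mem_insert_of_mem hj))

lemma eval_C_smul [IsScalarTower K K[X] M] (R : K[X][X]) (v : M) :
    HasEvalAt (fun ν => R.eval (C ν) • v) (R.eval q • v) q := by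
  refine ⟨Finsupp.onFinset R.support (fun n => R.coeff n • v) fun n hn => ?_, fun ν => ?_, ?_⟩
  · exact mem_support_iff.2 fun h => hn (by rw [h, zero_smul])
  · show R.eval (C ν) • v = _
    rw [Finsupp.onFinset_sum _ fun _ => smul_zero _, eval_eq_sum, Polynomial.sum, Finset.sum_smul]
    refine Finset.sum_congr rfl fun n _ => ?_
    rw [mul_comm, mul_smul, ← map_pow, C_smul_eq_smul]
  · rw [Finsupp.onFinset_sum _ fun _ => smul_zero _, eval_eq_sum, Polynomial.sum, Finset.sum_smul]
    exact Finset.sum_congr rfl fun n _ => by rw [mul_comm, mul_smul]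

lemma sub_C_pow_smul [IsScalarTower K K[X] M] (p : K[X]) (n : ℕ) (v : M) :
    HasEvalAt (fun ν => (p - C ν) ^ n • v) ((p - q) ^ n • v) q := by
  convert eval_C_smul (q := q) ((C p - X) ^ n) v using 2 <;> simp

lemma sum_shift [IsScalarTower K K[X] M] (s : Finset ℕ) (f : ℕ → M) (lam mu : K) :
    HasEvalAt (fun ν => ∑ n ∈ s, (-(X + C (ν + lam))) ^ n • f n) (∑ n ∈ s, (mu - lam) ^ n • f n)
      (-(X + C mu)) := by
  convert sum s fun n _ => sub_C_pow_smul (q := -(X + C mu)) (-(X + C lam)) n (f n) using 1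
  · refine funext fun ν => Finset.sum_congr rfl fun n _ => ?_
    rw [C_add, show -(X + (C ν + C lam)) = -(X + C lam) - C ν by ring]
  · simp only [show -(X + C lam) - -(X + C mu) = C (mu - lam) by rw [C_sub]; ring, ← C_pow,
      C_smul_eq_smul]

end HasEvalAt

end PolynomialExtension

namespace ConformalProduct

variable (m : ConformalProduct L)

lemma support_coeff_finite (a b : L) : (Function.support fun n => m.coeff n a b).Finite := by
  obtain ⟨N, hN⟩ := m.coeff_finite a b
  exact (Set.finite_Iio N).subset fun n hn => not_le.1 fun h => hn (hN n h)

lemma support_pow_smul_coeff_finite {R : Type*} [Monoid R] [DistribMulAction R L] (r : R)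
    (a b : L) : (Function.support fun n => r ^ n • m.coeff n a b).Finite :=
  (m.support_coeff_finite a b).subset (Function.support_smul_subset_right _ _)

def coeffs (a b : L) : ℕ →₀ L := Finsupp.ofSupportFinite _ (m.support_coeff_finite a b)

lemma finsum_pow_smul_coeff {R : Type*} [Monoid R] [DistribMulAction R L] (r : R) (a b : L) :
    ∑ᶠ n, r ^ n • m.coeff n a b = (m.coeffs a b).sum fun n v => r ^ n • v :=
  finsum_eq_sum_of_support_subset _ fun _ hn =>
    (m.coeffs a b).mem_support_iff.2 (Function.support_smul_subset_right _ _ hn)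

lemma mul_eq_sum (lam : ℂ) (a b : L) :
    m.mul lam a b = (m.coeffs a b).sum fun n v => lam ^ n • v :=
  m.finsum_pow_smul_coeff lam a b

lemma cmul_eq_sum (lam : ℂ) (a b : L) :
    m.cmul lam a b = (m.coeffs a b).sum fun n v => (-(X + C lam)) ^ n • v :=
  m.finsum_pow_smul_coeff _ a b

lemma hasEvalAt_mul (mu : ℂ) (a b : L) :
    HasEvalAt (fun ν => m.mul ν a b) (m.cmul mu a b) (-(X + C mu)) :=
  ⟨m.coeffs a b, fun ν => m.mul_eq_sum ν a b, m.cmul_eq_sum mu a b⟩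

lemma hasEvalAt_cmul_add (lam mu : ℂ) (a b : L) :
    HasEvalAt (fun ν => m.cmul (ν + lam) a b) (m.mul (mu - lam) a b) (-(X + C mu)) := by
  simpa only [cmul_eq_sum, mul_eq_sum, Finsupp.sum] using
    HasEvalAt.sum_shift _ (m.coeffs a b) lam mu

lemma mul_add_left (lam : ℂ) (a₁ a₂ b : L) :
    m.mul lam (a₁ + a₂) b = m.mul lam a₁ b + m.mul lam a₂ b := by
  simp only [mul, map_add, LinearMap.add_apply, smul_add]
  exact finsum_add_distrib (m.support_pow_smul_coeff_finite _ _ _)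
    (m.support_pow_smul_coeff_finite _ _ _)

lemma mul_add_right (lam : ℂ) (a b₁ b₂ : L) :
    m.mul lam a (b₁ + b₂) = m.mul lam a b₁ + m.mul lam a b₂ := by
  simp only [mul, map_add, smul_add]
  exact finsum_add_distrib (m.support_pow_smul_coeff_finite _ _ _)
    (m.support_pow_smul_coeff_finite _ _ _)

lemma mul_smul_left (lam c : ℂ) (a b : L) : m.mul lam (c • a) b = c • m.mul lam a b := by
  simp only [mul, map_smul, LinearMap.smul_apply, smul_comm _ c]
  exact (smul_finsum' c (m.support_pow_smul_coeff_finite _ _ _)).symm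

lemma mul_smul_right (lam c : ℂ) (a b : L) : m.mul lam a (c • b) = c • m.mul lam a b := by
  simp only [mul, map_smul, smul_comm _ c]
  exact (smul_finsum' c (m.support_pow_smul_coeff_finite _ _ _)).symm

def mulₗ (lam : ℂ) : L →ₗ[ℂ] L →ₗ[ℂ] L :=
  LinearMap.mk₂ ℂ (m.mul lam) (m.mul_add_left lam) (m.mul_smul_left lam) (m.mul_add_right lam)
    (m.mul_smul_right lam)

lemma mul_sum_left {ι : Type*} (lam : ℂ) (s : Finset ι) (a : ι → L) (b : L) :
    m.mul lam (∑ i ∈ s, a i) b = ∑ i ∈ s, m.mul lam (a i) b :=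
  LinearMap.map_sum₂ (m.mulₗ lam) s a b

lemma mul_sum_right {ι : Type*} (lam : ℂ) (a : L) (s : Finset ι) (b : ι → L) :
    m.mul lam a (∑ i ∈ s, b i) = ∑ i ∈ s, m.mul lam a (b i) :=
  map_sum (m.mulₗ lam a) b s

end ConformalProduct

namespace IsLambdaProduct

variable {S : SuperModule L} {br : ConformalProduct L} (hbr : IsLambdaProduct S br)
include hbr

lemma mul_mem {i j : ZMod 2} {a b : L} (ha : a ∈ S.grade i) (hb : b ∈ S.grade j) (lam : ℂ) :
    br.mul lam a b ∈ S.grade (i + j) := by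
  rw [br.mul_eq_sum]
  exact Submodule.finsuppSum_mem _ _ _ _ fun n _ =>
    Submodule.smul_mem _ _ (hbr.even i j a b ha hb n)

lemma mul_poly_smul_left (lam : ℂ) (P : ℂ[X]) (a b : L) :
    br.mul lam (P • a) b = P.eval (-lam) • br.mul lam a b := by
  induction P using Polynomial.induction_on with
  | C c => rw [C_smul_eq_smul, br.mul_smul_left, eval_C]
  | add P Q hP hQ => rw [add_smul, br.mul_add_left, hP, hQ, eval_add, add_smul]
  | monomial n c ih =>
    rw [show C c * X ^ (n + 1) = X * (C c * X ^ n) by ring, mul_smul, hbr.sesq_left, ih, smul_smul,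
      eval_mul (p := X), eval_X]

lemma mul_poly_smul_right (lam : ℂ) (P : ℂ[X]) (a b : L) :
    br.mul lam a (P • b) = P.comp (X + C lam) • br.mul lam a b := by
  induction P using Polynomial.induction_on with
  | C c => rw [C_smul_eq_smul, br.mul_smul_right, C_comp, C_smul_eq_smul]
  | add P Q hP hQ => rw [add_smul, br.mul_add_right, hP, hQ, add_comp, add_smul]
  | monomial n c ih =>
    rw [show C c * X ^ (n + 1) = X * (C c * X ^ n) by ring, mul_smul, hbr.sesq_right, ih,
      ← C_smul_eq_smul, ← add_smul, smul_smul, mul_comp (p := X), X_comp]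

/-- Inside the left factor of a bracket at `ν + λ`, `∂` acts as `-(ν + λ)`, so `-∂-ν` becomes `λ`. -/
lemma mul_cmul_left (m : ConformalProduct L) (nu lam : ℂ) (a b c : L) :
    br.mul (nu + lam) (m.cmul nu a b) c = br.mul (nu + lam) (m.mul lam a b) c := by
  rw [m.cmul_eq_sum, m.mul_eq_sum, Finsupp.sum, Finsupp.sum, br.mul_sum_left, br.mul_sum_left]
  refine Finset.sum_congr rfl fun n _ => ?_
  rw [hbr.mul_poly_smul_left, br.mul_smul_left]
  simp

lemma hasEvalAt_mul_cmul_right (m : ConformalProduct L) (lam mu : ℂ) (a b c : L) :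
    HasEvalAt (fun ν => br.mul lam a (m.cmul ν b c)) (br.mul lam a (m.mul (mu - lam) b c))
      (-(X + C mu)) := by
  convert HasEvalAt.sum_shift (m.coeffs b c).support (fun n => br.mul lam a (m.coeffs b c n))
    lam mu using 1
  · refine funext fun ν => ?_
    rw [m.cmul_eq_sum, Finsupp.sum, br.mul_sum_right]
    refine Finset.sum_congr rfl fun n _ => ?_
    rw [hbr.mul_poly_smul_right, C_add]
    simp only [pow_comp, neg_comp, add_comp, X_comp, C_comp]
    ring_nf
  · rw [m.mul_eq_sum, Finsupp.sum, br.mul_sum_right]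
    exact Finset.sum_congr rfl fun n _ => br.mul_smul_right _ _ _ _

end IsLambdaProduct

lemma IsCommAssoc.cmul_eq {S : SuperModule L} {m : ConformalProduct L} (hm : IsCommAssoc S m)
    {i j : ZMod 2} {a b : L} (ha : a ∈ S.grade i) (hb : b ∈ S.grade j) (lam : ℂ) :
    m.cmul lam b a = sgn i j • m.mul lam a b := by
  rw [hm.comm i j a b ha hb, smul_smul, sgn_mul_self, one_smul]

lemma IsLie.cmul_eq {S : SuperModule L} {br : ConformalProduct L} (hbr : IsLie S br)
    {i j : ZMod 2} {a b : L} (ha : a ∈ S.grade i) (hb : b ∈ S.grade j) (lam : ℂ) :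
    br.cmul lam b a = -(sgn i j • br.mul lam a b) := by
  rw [hbr.skew i j a b ha hb, smul_neg, smul_smul, sgn_mul_self, one_smul, neg_neg]

lemma IsTPCSA.two_smul_cmul_bracket {S : SuperModule L} {m br : ConformalProduct L}
    (hT : IsTPCSA S m br) {i j k : ZMod 2} {x y z : L}
    (hx : x ∈ S.grade i) (hy : y ∈ S.grade j) (hz : z ∈ S.grade k) (lam mu : ℂ) :
    (2 : ℂ) • m.cmul mu z (br.mul lam x y) =
      (sgn k i * sgn k j) • br.mul lam x (m.mul (mu - lam) y z)
        - (sgn k i * sgn (i + k) j) • br.mul (mu - lam) y (m.mul lam x z) := by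
  have hm := hT.commAssoc
  have hbr := hT.lie
  rw [sub_eq_add_neg, ← neg_smul]
  refine ((m.hasEvalAt_mul mu z _).smul 2).unique
    (((hbr.hasEvalAt_mul_cmul_right m lam mu x y z).smul _).add
      (((br.hasEvalAt_cmul_add lam mu y (m.mul lam x z)).smul _)) |>.congr fun ν => ?_)
  rw [hT.transposedLeibniz k i z x hz hx y ν lam, hm.comm k i z x hz hx ν,
    hm.comm k j z y hz hy ν, br.mul_smul_left, br.mul_smul_right, hbr.mul_cmul_left,
    hbr.skew (i + k) j _ y (hm.mul_mem hx hz lam) hy]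
  module

/-- the cyclic identity (3.15) in a transposed Poisson conformal superalgebra. -/
theorem statement_1 (S : SuperModule L) (m br : ConformalProduct L)
    (hT : IsTPCSA S m br) (i j k : ZMod 2) (x y z : L)
    (hx : x ∈ S.grade i) (hy : y ∈ S.grade j) (hz : z ∈ S.grade k) (lam mu : ℂ) :
    sgn i k • m.mul mu (br.mul lam x y) z
      + sgn i j • m.cmul lam (br.mul (mu - lam) y z) x
      + sgn j k • m.cmul (mu - lam) (br.cmul lam z x) y = 0 := by
  have hm := hT.commAssoc
  have hbr := hT.lie
  have hxz := hbr.mul_mem hx hz lam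
  have h₁ := hm.comm _ _ _ _ (hbr.mul_mem hx hy lam) hz mu
  have h₂ := hm.cmul_eq hx (hbr.mul_mem hy hz (mu - lam)) lam
  have h₃ : m.cmul (mu - lam) (br.cmul lam z x) y =
      -(sgn i k * sgn j (i + k)) • m.mul (mu - lam) y (br.mul lam x z) := by
    rw [hbr.cmul_eq hx hz, ← neg_smul, hm.cmul_eq hy (Submodule.smul_mem _ _ hxz),
      m.mul_smul_right, smul_smul, mul_neg, mul_comm]
  have e₁ := hT.two_smul_cmul_bracket hx hy hz lam mu
  have e₂ := hT.transposedLeibniz i j x y hx hy z lam (mu - lam)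
  have e₃ := hT.transposedLeibniz j i y x hy hx z (mu - lam) lam
  rw [add_sub_cancel] at e₂
  rw [hm.comm j i y x hy hx, br.mul_smul_left, hbr.mul_cmul_left, sub_add_cancel] at e₃
  rw [h₁, h₂, h₃, (eq_inv_smul_iff₀ two_ne_zero).2 e₁, (eq_inv_smul_iff₀ two_ne_zero).2 e₂,
    (eq_inv_smul_iff₀ two_ne_zero).2 e₃]
  simp only [sgn_add_left, sgn_add_right, sgn_comm k i, sgn_comm k j, sgn_comm j i]
  rcases sgn_eq_one_or_eq_neg_one i j with hij | hij <;>
    rcases sgn_eq_one_or_eq_neg_one i k with hik | hik <;>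
    rcases sgn_eq_one_or_eq_neg_one j k with hjk | hjk <;>
    simp only [hij, hik, hjk] <;> module

end TPCSAFormal
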